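/- Let τ, σ ∈ H. Then there exists ε > 0 such that for all z ∈ ℂ with |z| < ε, the series ∑_{j=1}^∞ (Z_j(τ,σ)/j) (−z)^j converges absolutely and Γ(z+σ, τ, σ)/Γ(σ, τ, σ) = exp( ∑_{j=1}^∞ (Z_j(τ,σ)/j) (−z)^j ). -/

import Mathlib

open Complex Filter Topology

/-- The open upper half-plane as a subset of `ℂ`. -/
def UHP : Set ℂ := {z : ℂ | 0 < z.im}

/-- `qexp τ = e^{2πiτ}`. -/
noncomputable def qexp (τ : ℂ) : ℂ := Complex.exp (2 * Real.pi * Complex.I * τ)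

/-- Elliptic zeta values `Z_k(τ,σ)`. -/
noncomputable def ellipticZeta (k : ℕ) (τ σ : ℂ) : ℂ :=
  -((2 * (Real.pi : ℂ) * Complex.I) ^ k / (Nat.factorial (k - 1) : ℂ)) *
    ∑' j : ℕ+, (j : ℂ) ^ (k - 1) *
      (qexp τ ^ (j : ℕ) - (-1 : ℂ) ^ k * qexp σ ^ (j : ℕ)) /
      ((1 - qexp τ ^ (j : ℕ)) * (1 - qexp σ ^ (j : ℕ)))

/-- `D_k(q)`: the normalized generating function of sums of `(k-1)`-st powers of divisors. -/
noncomputable def Dk (k : ℕ) (q : ℂ) : ℂ :=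
  ((-2 * (Real.pi : ℂ) * Complex.I) ^ k / (Nat.factorial (k - 1) : ℂ)) *
    ∑' n : ℕ+, (∑ d ∈ Nat.divisors (n : ℕ), (d : ℂ) ^ (k - 1)) * q ^ (n : ℕ)

/-- Ruijsenaars's elliptic gamma function. -/
noncomputable def ellipticGamma (z τ σ : ℂ) : ℂ :=
  ∏' p : ℕ × ℕ,
    (1 - qexp τ ^ (p.1 + 1) * qexp σ ^ (p.2 + 1) * Complex.exp (-(2 * Real.pi * Complex.I) * z)) /
    (1 - qexp τ ^ p.1 * qexp σ ^ p.2 * Complex.exp (2 * Real.pi * Complex.I * z))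

/-- The modified theta function `θ₀(z,τ)`. -/
noncomputable def theta0 (z τ : ℂ) : ℂ :=
  ∏' j : ℕ, (1 - qexp τ ^ (j + 1) * Complex.exp (-(2 * Real.pi * Complex.I) * z)) *
            (1 - qexp τ ^ j * Complex.exp (2 * Real.pi * Complex.I * z))

/-- A modular form of weight `k` for `SL(2,ℤ)`: a holomorphic function on the
upper half-plane transforming with weight `k` under `SL(2,ℤ)` and bounded as `Im τ → ∞`. -/
def IsModularForm (k : ℕ) (G : ℂ → ℂ) : Prop :=
  DifferentiableOn ℂ G UHP ∧
  (∀ A : Matrix.SpecialLinearGroup (Fin 2) ℤ, ∀ τ ∈ UHP,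
      G (((A 0 0 : ℤ) * τ + (A 0 1 : ℤ)) / ((A 1 0 : ℤ) * τ + (A 1 1 : ℤ))) =
        ((A 1 0 : ℤ) * τ + (A 1 1 : ℤ)) ^ k * G τ) ∧
  (∃ C : ℝ, ∀ τ ∈ UHP, 1 ≤ τ.im → ‖G τ‖ ≤ C)

/-- All factors in the defining double product of the elliptic gamma function are nonzero. -/
def EGFactorsNeZero (z τ σ : ℂ) : Prop :=
  ∀ j ℓ : ℕ,
    (1 - qexp τ ^ (j + 1) * qexp σ ^ (ℓ + 1) * Complex.exp (-(2 * Real.pi * Complex.I) * z)) ≠ 0 ∧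
    (1 - qexp τ ^ j * qexp σ ^ ℓ * Complex.exp (2 * Real.pi * Complex.I * z)) ≠ 0

/-!
Write `q = e(τ)`, `r = e(σ)`, `x = e(z)` with `e(w) = exp(2πiw)`. Shifting `z` by `σ` turns the
double product into `∏_{j,ℓ} (1 - q·qʲrˡ·x⁻¹) / (1 - r·qʲrˡ·x)`, so relative to `z = 0` its
logarithm is a double sum of the series `-log(1 - w) = ∑ wⁿ/n`. Summing the geometric series over
`j, ℓ` first gives `∑ₙ (rⁿ(xⁿ - 1) - qⁿ(x⁻ⁿ - 1)) / (n(1 - qⁿ)(1 - rⁿ))`; expanding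
`x^{±n} - 1 = ∑ₖ (±2πinz)ᵏ/k!` and summing over `n` first gives `∑ₖ (Z_k/k)(-z)ᵏ`. Both
interchanges are justified by absolute convergence once `max(|q|, |r|)·e^{2π|z|} < 1`.
-/

theorem Summable.hasSum_fiberwise_comm {α β γ : Type*} [AddCommMonoid α] [TopologicalSpace α]
    [ContinuousAdd α] [T3Space α] {f : β × γ → α} (hf : Summable f) {g : β → α} {h : γ → α}
    (hg : ∀ b, HasSum (fun c => f (b, c)) (g b)) (hh : ∀ c, HasSum (fun b => f (b, c)) (h c)) :
    HasSum h (∑' b, g b) := by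
  rw [(hf.hasSum.prod_fiberwise hg).tsum_eq]
  exact ((Equiv.prodComm γ β).hasSum_iff.2 hf.hasSum).prod_fiberwise hh

theorem summable_norm_tsum_fiber {β γ E : Type*} [NormedAddCommGroup E] {f : β × γ → E}
    (hf : Summable fun p => ‖f p‖) : Summable fun b => ‖∑' c, f (b, c)‖ := by
  have hfib := (summable_prod_of_nonneg fun _ => norm_nonneg _).1 hf
  exact hfib.2.of_nonneg_of_le (fun _ => norm_nonneg _)
    fun b => norm_tsum_le_tsum_norm (hfib.1 b)

theorem hasSum_pnat_pow_div_factorial {𝔸 : Type*} [NormedDivisionRing 𝔸] [NormedAlgebra ℚ 𝔸]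
    [CompleteSpace 𝔸] (x : 𝔸) :
    HasSum (fun k : ℕ+ => x ^ (k : ℕ) / ((k : ℕ).factorial : 𝔸)) (NormedSpace.exp x - 1) := by
  refine hasSum_pnat_iff (f := fun k : ℕ => x ^ k / (k.factorial : 𝔸)).2 ?_
  simpa using NormedSpace.expSeries_div_hasSum_exp x

section NormedField

variable {𝕜 : Type*} [NormedField 𝕜]

theorem hasSum_pow_mul_pow [CompleteSpace 𝕜] {a b : 𝕜} (ha : ‖a‖ < 1) (hb : ‖b‖ < 1) :
    HasSum (fun p : ℕ × ℕ => a ^ p.1 * b ^ p.2) ((1 - a)⁻¹ * (1 - b)⁻¹) := by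
  have hna : Summable fun n : ℕ => ‖a ^ n‖ := by
    simpa [norm_pow] using summable_geometric_of_lt_one (norm_nonneg a) ha
  have hnb : Summable fun n : ℕ => ‖b ^ n‖ := by
    simpa [norm_pow] using summable_geometric_of_lt_one (norm_nonneg b) hb
  exact (hasSum_geometric_of_norm_lt_one ha).mul (hasSum_geometric_of_norm_lt_one hb)
    (summable_mul_of_summable_norm hna hnb)

theorem summable_norm_pow_mul_pow {a b : 𝕜} (ha : ‖a‖ < 1) (hb : ‖b‖ < 1) :
    Summable fun p : ℕ × ℕ => ‖a ^ p.1 * b ^ p.2‖ := by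
  simpa only [norm_mul, norm_pow] using
    (summable_geometric_of_lt_one (norm_nonneg a) ha).mul_of_nonneg
      (summable_geometric_of_lt_one (norm_nonneg b) hb) (fun _ => by positivity)
      (fun _ => by positivity)

theorem hasSum_mul_pow_mul_pow_pow [CompleteSpace 𝕜] {q r : 𝕜} (hq : ‖q‖ < 1) (hr : ‖r‖ < 1)
    (c : 𝕜) {n : ℕ} (hn : n ≠ 0) :
    HasSum (fun p : ℕ × ℕ => (c * (q ^ p.1 * r ^ p.2)) ^ n)
      (c ^ n / ((1 - q ^ n) * (1 - r ^ n))) := by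
  have hqn : ‖q ^ n‖ < 1 := by rw [norm_pow]; exact pow_lt_one₀ (norm_nonneg q) hq hn
  have hrn : ‖r ^ n‖ < 1 := by rw [norm_pow]; exact pow_lt_one₀ (norm_nonneg r) hr hn
  have hterm : (fun p : ℕ × ℕ => (c * (q ^ p.1 * r ^ p.2)) ^ n) =
      fun p => c ^ n * ((q ^ n) ^ p.1 * (r ^ n) ^ p.2) := funext fun p => by ring
  rw [hterm, div_eq_mul_inv, mul_inv]
  exact (hasSum_pow_mul_pow hqn hrn).mul_left (c ^ n)

theorem norm_mul_pow_mul_pow_mul_le {q r : 𝕜} (hq : ‖q‖ ≤ 1) (hr : ‖r‖ ≤ 1) (c x : 𝕜)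
    (j ℓ : ℕ) : ‖c * (q ^ j * r ^ ℓ) * x‖ ≤ ‖c * x‖ := by
  have hg : ‖q ^ j * r ^ ℓ‖ ≤ 1 := by
    rw [norm_mul, norm_pow, norm_pow]
    exact mul_le_one₀ (pow_le_one₀ (norm_nonneg q) hq) (by positivity)
      (pow_le_one₀ (norm_nonneg r) hr)
  calc ‖c * (q ^ j * r ^ ℓ) * x‖ = ‖c * x‖ * ‖q ^ j * r ^ ℓ‖ := by simp only [norm_mul]; ring
    _ ≤ ‖c * x‖ := mul_le_of_le_one_right (norm_nonneg _) hg

theorem one_sub_norm_le_norm_one_sub_pow {q : 𝕜} (hq : ‖q‖ ≤ 1) {n : ℕ} (hn : n ≠ 0) :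
    1 - ‖q‖ ≤ ‖1 - q ^ n‖ := by
  have h := norm_sub_norm_le (1 : 𝕜) (q ^ n)
  rw [norm_one, norm_pow] at h
  linarith [pow_le_of_le_one (norm_nonneg q) hq hn]

theorem norm_pow_mul_pow_sub_one_le {a x : 𝕜} {s : ℝ} (has : ‖a‖ ≤ s) (haxs : ‖a * x‖ ≤ s)
    {n : ℕ} (hn : n ≠ 0) : ‖a ^ n * (x ^ n - 1)‖ ≤ ‖a‖ * (‖x‖ + 1) * s ^ (n - 1) := by
  obtain ⟨m, rfl⟩ := Nat.exists_eq_succ_of_ne_zero hn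
  have h1 : ‖a * x‖ ^ m ≤ s ^ m := pow_le_pow_left₀ (norm_nonneg _) haxs m
  have h2 : ‖a‖ ^ m ≤ s ^ m := pow_le_pow_left₀ (norm_nonneg _) has m
  calc ‖a ^ (m + 1) * (x ^ (m + 1) - 1)‖ = ‖(a * x) ^ (m + 1) - a ^ (m + 1)‖ := by ring_nf
    _ ≤ ‖a * x‖ ^ (m + 1) + ‖a‖ ^ (m + 1) := by
          simpa only [norm_pow] using norm_sub_le ((a * x) ^ (m + 1)) (a ^ (m + 1))
    _ = ‖a‖ * ‖x‖ * ‖a * x‖ ^ m + ‖a‖ * ‖a‖ ^ m := by rw [norm_mul]; ring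
    _ ≤ ‖a‖ * ‖x‖ * s ^ m + ‖a‖ * s ^ m := by gcongr
    _ = ‖a‖ * (‖x‖ + 1) * s ^ (m + 1 - 1) := by simp only [Nat.add_sub_cancel]; ring

end NormedField

theorem summable_norm_mul_pow_div_factorial {c : ℕ+ → ℂ} {w : ℂ}
    (hc : Summable fun n : ℕ+ => ‖c n‖ * Real.exp (n * ‖w‖)) :
    Summable fun p : ℕ+ × ℕ+ => ‖c p.1 * ((p.1 * w) ^ (p.2 : ℕ) / (p.2 : ℕ).factorial)‖ := by
  have hfiber (n : ℕ+) : HasSum (fun k : ℕ+ => ‖c n * ((n * w) ^ (k : ℕ) / (k : ℕ).factorial)‖)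
      (‖c n‖ * (Real.exp (n * ‖w‖) - 1)) := by
    have hnorm (k : ℕ+) : ‖c n * ((n * w) ^ (k : ℕ) / (k : ℕ).factorial)‖ =
        ‖c n‖ * ((n * ‖w‖) ^ (k : ℕ) / (k : ℕ).factorial) := by
      simp [norm_pow]
    rw [funext hnorm, Real.exp_eq_exp_ℝ]
    exact (hasSum_pnat_pow_div_factorial ((n : ℝ) * ‖w‖)).mul_left ‖c n‖
  refine (summable_prod_of_nonneg fun _ => norm_nonneg _).2 ⟨fun n => (hfiber n).summable, ?_⟩
  simp_rw [(hfiber _).tsum_eq]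
  refine hc.of_nonneg_of_le (fun n => mul_nonneg (norm_nonneg _) ?_)
    (fun n => mul_le_mul_of_nonneg_left (by linarith) (norm_nonneg _))
  linarith [Real.one_le_exp (by positivity : (0 : ℝ) ≤ n * ‖w‖)]

namespace Complex

theorem hasSum_pnat_taylorSeries_neg_log {w : ℂ} (hw : ‖w‖ < 1) :
    HasSum (fun n : ℕ+ => w ^ (n : ℕ) / n) (-log (1 - w)) := by
  refine hasSum_pnat_iff (f := fun n : ℕ => w ^ n / n).2 ?_
  simpa using hasSum_taylorSeries_neg_log hw

theorem summable_log_one_sub_of_summable {ι : Type*} {a : ι → ℂ} (ha : Summable a) :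
    Summable fun i => log (1 - a i) := by
  simpa [sub_eq_add_neg] using summable_log_one_add_of_summable ha.neg

theorem tprod_one_sub_div_one_sub_eq_exp {ι : Type*} {a b : ι → ℂ} (ha : Summable a)
    (hb : Summable b) (ha1 : ∀ i, a i ≠ 1) (hb1 : ∀ i, b i ≠ 1) :
    ∏' i, (1 - a i) / (1 - b i) = exp (∑' i, log (1 - a i) - ∑' i, log (1 - b i)) := by
  have hfactor (i : ι) : (1 - a i) / (1 - b i) = exp (log (1 - a i) - log (1 - b i)) := by
    rw [exp_sub, exp_log (sub_ne_zero.2 (ha1 i).symm), exp_log (sub_ne_zero.2 (hb1 i).symm)]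
  simp_rw [hfactor]
  exact ((summable_log_one_sub_of_summable ha).hasSum.sub
    (summable_log_one_sub_of_summable hb).hasSum).cexp.tprod_eq

theorem hasSum_tsum_log_one_sub_sub_tsum_log_one_sub_mul {ι : Type*} {a : ι → ℂ} {A : ℕ+ → ℂ}
    {x : ℂ} {s : ℝ} (ha : Summable fun i => ‖a i‖) (hs0 : 0 ≤ s) (hs : s < 1)
    (has : ∀ i, ‖a i‖ ≤ s) (haxs : ∀ i, ‖a i * x‖ ≤ s)
    (hA : ∀ n : ℕ+, HasSum (fun i => a i ^ (n : ℕ)) (A n)) :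
    HasSum (fun n : ℕ+ => A n / n * (x ^ (n : ℕ) - 1))
      (∑' i, log (1 - a i) - ∑' i, log (1 - a i * x)) := by
  set F : ι × ℕ+ → ℂ := fun p => a p.1 ^ (p.2 : ℕ) / p.2 * (x ^ (p.2 : ℕ) - 1)
  have hgeom : Summable fun n : ℕ+ => s ^ ((n : ℕ) - 1) :=
    summable_pnat_iff_summable_succ (f := fun n => s ^ (n - 1)).2
      (by simpa using summable_geometric_of_lt_one hs0 hs)
  have hF : Summable F := by
    refine Summable.of_norm_bounded ((ha.mul_right (‖x‖ + 1)).mul_of_nonneg hgeom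
      (fun _ => by positivity) (fun _ => by positivity)) fun p => ?_
    calc ‖F p‖ ≤ ‖a p.1 ^ (p.2 : ℕ) * (x ^ (p.2 : ℕ) - 1)‖ := by
          rw [show F p = a p.1 ^ (p.2 : ℕ) * (x ^ (p.2 : ℕ) - 1) / p.2 by ring, norm_div,
            norm_natCast]
          exact div_le_self (norm_nonneg _) (Nat.one_le_cast.2 p.2.pos)
      _ ≤ _ := norm_pow_mul_pow_sub_one_le (has p.1) (haxs p.1) p.2.ne_zero
  have hlog (i : ι) : HasSum (fun n : ℕ+ => F (i, n)) (log (1 - a i) - log (1 - a i * x)) := by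
    have hFi : (fun n : ℕ+ => F (i, n)) =
        fun n : ℕ+ => (a i * x) ^ (n : ℕ) / n - a i ^ (n : ℕ) / n :=
      funext fun n => by simp only [F, mul_pow]; ring
    rw [hFi, show log (1 - a i) - log (1 - a i * x) = -log (1 - a i * x) - -log (1 - a i) by ring]
    exact (hasSum_pnat_taylorSeries_neg_log ((haxs i).trans_lt hs)).sub
      (hasSum_pnat_taylorSeries_neg_log ((has i).trans_lt hs))
  have hpow (n : ℕ+) : HasSum (fun i => F (i, n)) (A n / n * (x ^ (n : ℕ) - 1)) :=
    ((hA n).div_const (n : ℂ)).mul_right (x ^ (n : ℕ) - 1)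
  rw [← Summable.tsum_sub (summable_log_one_sub_of_summable ha.of_norm)
    (summable_log_one_sub_of_summable (ha.of_norm.mul_right x))]
  exact hF.hasSum_fiberwise_comm hlog hpow

end Complex

theorem qexp_add (a b : ℂ) : qexp (a + b) = qexp a * qexp b := by
  simp only [qexp, ← Complex.exp_add]
  ring_nf

theorem qexp_zero : qexp 0 = 1 := by
  simp [qexp]

theorem norm_qexp_lt_one {τ : ℂ} (hτ : τ ∈ UHP) : ‖qexp τ‖ < 1 := by
  have hτ' : 0 < τ.im := hτ
  rw [qexp, Complex.norm_exp, Real.exp_lt_one_iff]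
  simpa using mul_pos Real.two_pi_pos hτ'

theorem norm_qexp_le (z : ℂ) : ‖qexp z‖ ≤ Real.exp (2 * Real.pi * ‖z‖) := by
  refine (Complex.norm_exp_le_exp_norm _).trans (le_of_eq ?_)
  simp [abs_of_pos Real.pi_pos]

theorem ellipticGamma_add_right (z τ σ : ℂ) :
    ellipticGamma (z + σ) τ σ = ∏' p : ℕ × ℕ,
      (1 - qexp τ * (qexp τ ^ p.1 * qexp σ ^ p.2) * qexp (-z)) /
      (1 - qexp σ * (qexp τ ^ p.1 * qexp σ ^ p.2) * qexp z) := by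
  have hnum : Complex.exp (-(2 * Real.pi * Complex.I) * (z + σ)) = qexp (-z) * qexp (-σ) := by
    rw [← qexp_add, qexp]
    ring_nf
  have hden : Complex.exp (2 * Real.pi * Complex.I * (z + σ)) = qexp z * qexp σ := by
    rw [← qexp_add, qexp]
  have hσ : qexp σ * qexp (-σ) = 1 := by
    rw [← qexp_add, add_neg_cancel, qexp_zero]
  refine tprod_congr fun p => ?_
  rw [hnum, hden]
  congr 1
  · linear_combination (-(qexp τ ^ (p.1 + 1) * qexp σ ^ p.2 * qexp (-z))) * hσ
  · ring

/-- The closed form of `∑_{j,ℓ ≥ 0} (c qʲ rˡ)ⁿ / n`. -/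
noncomputable def logGammaCoeff (q r c : ℂ) (n : ℕ) : ℂ :=
  c ^ n / ((1 - q ^ n) * (1 - r ^ n)) / n

theorem norm_logGammaCoeff_le {q r : ℂ} (hq : ‖q‖ < 1) (hr : ‖r‖ < 1) (c : ℂ) {n : ℕ}
    (hn : n ≠ 0) : ‖logGammaCoeff q r c n‖ ≤ ‖c‖ ^ n / ((1 - ‖q‖) * (1 - ‖r‖)) := by
  rw [logGammaCoeff, norm_div, norm_div, norm_mul, norm_pow, Complex.norm_natCast]
  refine (div_le_self (by positivity) (Nat.one_le_cast.2 (Nat.pos_of_ne_zero hn))).trans ?_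
  refine div_le_div_of_nonneg_left (by positivity) (mul_pos (by linarith) (by linarith)) ?_
  exact mul_le_mul (one_sub_norm_le_norm_one_sub_pow hq.le hn)
    (one_sub_norm_le_norm_one_sub_pow hr.le hn) (by linarith) (norm_nonneg _)

theorem summable_norm_logGammaCoeff_mul_exp {q r c : ℂ} {t : ℝ} (hq : ‖q‖ < 1) (hr : ‖r‖ < 1)
    (hct : ‖c‖ * Real.exp t < 1) :
    Summable fun n : ℕ+ => ‖logGammaCoeff q r c n‖ * Real.exp (n * t) := by
  have hgeom := ((summable_geometric_of_lt_one (by positivity) hct).comp_injective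
    PNat.coe_injective).div_const ((1 - ‖q‖) * (1 - ‖r‖))
  refine hgeom.of_nonneg_of_le (fun _ => by positivity) fun n => ?_
  calc ‖logGammaCoeff q r c n‖ * Real.exp (n * t)
      ≤ ‖c‖ ^ (n : ℕ) / ((1 - ‖q‖) * (1 - ‖r‖)) * Real.exp t ^ (n : ℕ) := by
        rw [← Real.exp_nat_mul]
        exact mul_le_mul_of_nonneg_right (norm_logGammaCoeff_le hq hr c n.ne_zero) (by positivity)
    _ = (‖c‖ * Real.exp t) ^ (n : ℕ) / ((1 - ‖q‖) * (1 - ‖r‖)) := by ring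

theorem logGammaCoeff_mul_pow_div_factorial_sub (q r P z : ℂ) {n k : ℕ} (hn : n ≠ 0)
    (hk : k ≠ 0) :
    logGammaCoeff q r r n * ((n * (P * z)) ^ k / k.factorial) -
      logGammaCoeff q r q n * ((n * -(P * z)) ^ k / k.factorial) =
    -(P ^ k / (k - 1).factorial) / k * (-z) ^ k *
      (n ^ (k - 1) * (q ^ n - (-1) ^ k * r ^ n) / ((1 - q ^ n) * (1 - r ^ n))) := by
  obtain ⟨m, rfl⟩ := Nat.exists_eq_succ_of_ne_zero hk
  have hn' : (n : ℂ) ≠ 0 := Nat.cast_ne_zero.2 hn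
  have he : ((-1 : ℂ) ^ (m + 1)) * (-1) ^ (m + 1) = 1 := by rw [← mul_pow]; norm_num
  simp only [logGammaCoeff, Nat.succ_eq_add_one, Nat.add_sub_cancel, Nat.factorial_succ,
    Nat.cast_mul, neg_pow z, mul_neg, neg_pow (↑n * (P * z)), mul_pow, pow_succ (n : ℂ)]
  generalize (-1 : ℂ) ^ (m + 1) = e at *
  generalize (1 - q ^ n) * (1 - r ^ n) = d
  field_simp
  -- the two sides differ by a multiple of `((-1) ^ k) ^ 2 - 1`
  linear_combination (-(P ^ (m + 1) * z ^ (m + 1) * r ^ n / (d * m.factorial))) * he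

theorem tsum_logGammaCoeff_mul_pow_div_factorial_sub_eq_ellipticZeta (τ σ z : ℂ) (k : ℕ+) :
    ∑' n : ℕ+,
      (logGammaCoeff (qexp τ) (qexp σ) (qexp σ) n *
          ((n * (2 * Real.pi * Complex.I * z)) ^ (k : ℕ) / (k : ℕ).factorial) -
        logGammaCoeff (qexp τ) (qexp σ) (qexp τ) n *
          ((n * -(2 * Real.pi * Complex.I * z)) ^ (k : ℕ) / (k : ℕ).factorial)) =
      ellipticZeta k τ σ / k * (-z) ^ (k : ℕ) := by
  rw [ellipticZeta, show ∀ a S : ℂ, -a * S / k * (-z) ^ (k : ℕ) = -a / k * (-z) ^ (k : ℕ) * S by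
    intros; ring, ← tsum_mul_left]
  exact tsum_congr fun n => logGammaCoeff_mul_pow_div_factorial_sub _ _ _ z n.ne_zero k.ne_zero

namespace Complex

theorem hasSum_tsum_log_one_sub_mul_pow_mul_pow {q r c x : ℂ} (hq : ‖q‖ < 1) (hr : ‖r‖ < 1)
    (hc : ‖c‖ < 1) (hcx : ‖c * x‖ < 1) :
    HasSum (fun n : ℕ+ => logGammaCoeff q r c n * (x ^ (n : ℕ) - 1))
      (∑' p : ℕ × ℕ, log (1 - c * (q ^ p.1 * r ^ p.2)) -
        ∑' p : ℕ × ℕ, log (1 - c * (q ^ p.1 * r ^ p.2) * x)) := by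
  have hbound (w : ℂ) (p : ℕ × ℕ) := norm_mul_pow_mul_pow_mul_le hq.le hr.le c w p.1 p.2
  refine hasSum_tsum_log_one_sub_sub_tsum_log_one_sub_mul
    (((summable_norm_pow_mul_pow hq hr).mul_left ‖c‖).congr fun p => (norm_mul _ _).symm)
    ((norm_nonneg c).trans (le_max_left _ _)) (max_lt hc hcx) (fun p => ?_)
    (fun p => (hbound x p).trans (le_max_right _ _))
    (fun n => hasSum_mul_pow_mul_pow_pow hq hr c n.ne_zero)
  simpa using (hbound 1 p).trans (le_max_left _ _)

theorem tprod_one_sub_div_one_sub_mul_pow_mul_pow_eq_exp {q r x y : ℂ} (hq : ‖q‖ < 1)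
    (hr : ‖r‖ < 1) (hqy : ‖q * y‖ < 1) (hrx : ‖r * x‖ < 1) :
    ∏' p : ℕ × ℕ, (1 - q * (q ^ p.1 * r ^ p.2) * y) / (1 - r * (q ^ p.1 * r ^ p.2) * x) =
      exp (∑' p : ℕ × ℕ, log (1 - q * (q ^ p.1 * r ^ p.2) * y) -
        ∑' p : ℕ × ℕ, log (1 - r * (q ^ p.1 * r ^ p.2) * x)) := by
  have hg := (summable_norm_pow_mul_pow hq hr).of_norm
  have hne {c w : ℂ} (hcw : ‖c * w‖ < 1) (p : ℕ × ℕ) : c * (q ^ p.1 * r ^ p.2) * w ≠ 1 := by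
    intro h
    have := (norm_mul_pow_mul_pow_mul_le hq.le hr.le c w p.1 p.2).trans_lt hcw
    simp [h] at this
  exact tprod_one_sub_div_one_sub_eq_exp ((hg.mul_left q).mul_right y)
    ((hg.mul_left r).mul_right x) (hne hqy) (hne hrx)

end Complex

theorem ellipticGamma_add_right_div_eq_exp_tsum {τ σ z : ℂ}
    (hq : ‖qexp τ‖ * Real.exp (2 * Real.pi * ‖z‖) < 1)
    (hr : ‖qexp σ‖ * Real.exp (2 * Real.pi * ‖z‖) < 1) :
    ellipticGamma (z + σ) τ σ / ellipticGamma σ τ σ = Complex.exp (∑' n : ℕ+,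
      (logGammaCoeff (qexp τ) (qexp σ) (qexp σ) n * (qexp z ^ (n : ℕ) - 1) -
        logGammaCoeff (qexp τ) (qexp σ) (qexp τ) n * (qexp (-z) ^ (n : ℕ) - 1))) := by
  have hΓ0 := ellipticGamma_add_right 0 τ σ
  simp only [zero_add, neg_zero, qexp_zero] at hΓ0
  set q := qexp τ
  set r := qexp σ
  set E := Real.exp (2 * Real.pi * ‖z‖)
  have hE : 1 ≤ E := Real.one_le_exp (by positivity)
  have hq1 : ‖q‖ < 1 := (le_mul_of_one_le_right (norm_nonneg q) hE).trans_lt hq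
  have hr1 : ‖r‖ < 1 := (le_mul_of_one_le_right (norm_nonneg r) hE).trans_lt hr
  have hsmall {c w : ℂ} (hc : ‖c‖ * E < 1) (hw : ‖w‖ ≤ E) : ‖c * w‖ < 1 :=
    (norm_mul_le_of_le le_rfl hw).trans_lt hc
  have hrx : ‖r * qexp z‖ < 1 := hsmall hr (norm_qexp_le z)
  have hqy : ‖q * qexp (-z)‖ < 1 := hsmall hq (by simpa using norm_qexp_le (-z))
  rw [ellipticGamma_add_right, hΓ0,
    Complex.tprod_one_sub_div_one_sub_mul_pow_mul_pow_eq_exp hq1 hr1 hqy hrx,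
    Complex.tprod_one_sub_div_one_sub_mul_pow_mul_pow_eq_exp (x := 1) (y := 1) hq1 hr1
      (by simpa) (by simpa),
    ← Complex.exp_sub,
    ((Complex.hasSum_tsum_log_one_sub_mul_pow_mul_pow hq1 hr1 hr1 hrx).sub
      (Complex.hasSum_tsum_log_one_sub_mul_pow_mul_pow hq1 hr1 hq1 hqy)).tsum_eq]
  simp only [mul_one]
  ring_nf

theorem hasSum_ellipticZeta_div_mul_neg_pow {τ σ z : ℂ}
    (hq : ‖qexp τ‖ * Real.exp (2 * Real.pi * ‖z‖) < 1)
    (hr : ‖qexp σ‖ * Real.exp (2 * Real.pi * ‖z‖) < 1) :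
    Summable (fun k : ℕ+ => ‖ellipticZeta k τ σ / k * (-z) ^ (k : ℕ)‖) ∧
      HasSum (fun k : ℕ+ => ellipticZeta k τ σ / k * (-z) ^ (k : ℕ)) (∑' n : ℕ+,
        (logGammaCoeff (qexp τ) (qexp σ) (qexp σ) n * (qexp z ^ (n : ℕ) - 1) -
          logGammaCoeff (qexp τ) (qexp σ) (qexp τ) n * (qexp (-z) ^ (n : ℕ) - 1))) := by
  set q := qexp τ
  set r := qexp σ
  set w := 2 * Real.pi * Complex.I * z
  have hw : ‖w‖ = 2 * Real.pi * ‖z‖ := by simp [w, abs_of_pos Real.pi_pos]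
  have hE : 1 ≤ Real.exp ‖w‖ := Real.one_le_exp (norm_nonneg w)
  have hq1 : ‖q‖ < 1 := (le_mul_of_one_le_right (norm_nonneg q) (hw ▸ hE)).trans_lt hq
  have hr1 : ‖r‖ < 1 := (le_mul_of_one_le_right (norm_nonneg r) (hw ▸ hE)).trans_lt hr
  set D : ℕ+ × ℕ+ → ℂ := fun p =>
    logGammaCoeff q r r p.1 * ((p.1 * w) ^ (p.2 : ℕ) / (p.2 : ℕ).factorial) -
      logGammaCoeff q r q p.1 * ((p.1 * -w) ^ (p.2 : ℕ) / (p.2 : ℕ).factorial)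
  have hD : Summable fun p => ‖D p‖ := by
    have hB := summable_norm_mul_pow_div_factorial (w := w)
      (summable_norm_logGammaCoeff_mul_exp (c := r) hq1 hr1 (by rwa [hw]))
    have hA := summable_norm_mul_pow_div_factorial (w := -w)
      (summable_norm_logGammaCoeff_mul_exp (c := q) hq1 hr1 (by rwa [norm_neg, hw]))
    exact (hB.add hA).of_nonneg_of_le (fun _ => norm_nonneg _) fun _ => norm_sub_le _ _
  have hrow (n : ℕ+) : HasSum (fun k => D (n, k))
      (logGammaCoeff q r r n * (qexp z ^ (n : ℕ) - 1) -
        logGammaCoeff q r q n * (qexp (-z) ^ (n : ℕ) - 1)) := by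
    have hx : qexp z ^ (n : ℕ) = Complex.exp (n * w) := by rw [Complex.exp_nat_mul]; rfl
    have hy : qexp (-z) ^ (n : ℕ) = Complex.exp (n * -w) := by
      rw [Complex.exp_nat_mul, qexp, mul_neg]
    rw [hx, hy, Complex.exp_eq_exp_ℂ]
    exact ((hasSum_pnat_pow_div_factorial ((n : ℂ) * w)).mul_left (logGammaCoeff q r r n)).sub
      ((hasSum_pnat_pow_div_factorial ((n : ℂ) * -w)).mul_left (logGammaCoeff q r q n))
  have hcol (k : ℕ+) : ∑' n, D (n, k) = ellipticZeta k τ σ / k * (-z) ^ (k : ℕ) :=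
    tsum_logGammaCoeff_mul_pow_div_factorial_sub_eq_ellipticZeta τ σ z k
  simp_rw [← hcol]
  exact ⟨summable_norm_tsum_fiber (f := fun p => D p.swap) hD.prod_symm,
    hD.of_norm.hasSum_fiberwise_comm hrow fun k => (hD.of_norm.prod_symm.prod_factor k).hasSum⟩

/-- the elliptic zeta values are the Taylor coefficients of the logarithm
of `Γ(z+σ,τ,σ)/Γ(σ,τ,σ)`: for `z` small the series `∑ (Z_j(τ,σ)/j)(-z)^j` converges
absolutely and its exponential is `Γ(z+σ,τ,σ)/Γ(σ,τ,σ)`. -/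
theorem ellipticGamma_log_taylor_ellipticZeta
    (τ σ : ℂ) (hτ : τ ∈ UHP) (hσ : σ ∈ UHP) :
    ∃ ε > (0 : ℝ), ∀ z : ℂ, ‖z‖ < ε →
      Summable (fun j : ℕ+ => ‖ellipticZeta (j : ℕ) τ σ / (j : ℂ) * (-z) ^ (j : ℕ)‖) ∧
      ellipticGamma (z + σ) τ σ / ellipticGamma σ τ σ =
        Complex.exp (∑' j : ℕ+, ellipticZeta (j : ℕ) τ σ / (j : ℂ) * (-z) ^ (j : ℕ)) := by
  have hsmall {c : ℂ} (hc : ‖c‖ < 1) :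
      ∀ᶠ z in 𝓝 (0 : ℂ), ‖c‖ * Real.exp (2 * Real.pi * ‖z‖) < 1 := by
    refine (continuous_const.mul (by fun_prop)).continuousAt.eventually_lt continuousAt_const ?_
    simpa using hc
  obtain ⟨ε, hε, hz⟩ := Metric.eventually_nhds_iff.1
    ((hsmall (norm_qexp_lt_one hτ)).and (hsmall (norm_qexp_lt_one hσ)))
  refine ⟨ε, hε, fun z hzε => ?_⟩
  obtain ⟨hq, hr⟩ := hz (by simpa using hzε)
  obtain ⟨hsum, htaylor⟩ := hasSum_ellipticZeta_div_mul_neg_pow hq hr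
  exact ⟨hsum, by rw [ellipticGamma_add_right_div_eq_exp_tsum hq hr, htaylor.tsum_eq]⟩
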